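/- Let (p_t, P_T) be a drift process and let ℬ₀ ⊆ ℬ be a generating set of the σ-algebra ℬ (i.e. σ(ℬ₀) = ℬ) that is stable under finite intersections. Then (p_t, P_T) has proper drift if and only if there exists a set A ∈ ℬ₀ such that A and its complement A^C are alternating sets (in particular P_T(A) ∈ (0,1) and p_A ≠ p_{A^C}). -/

import Mathlib

open MeasureTheory ProbabilityTheory

/-- A drift process has *no drift* if `p s = p t` for `(P_T × P_T)`-a.e. pair `(s, t)`. -/
def HasNoDrift {𝔗 𝔛 : Type*} [MeasurableSpace 𝔗] [MeasurableSpace 𝔛]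
    (p : Kernel 𝔗 𝔛) (PT : Measure 𝔗) : Prop :=
  ∀ᵐ st ∂(PT.prod PT), p st.1 = p st.2

/-- A drift process `(p_t, P_T)` has *no proper drift* if there exists a drift process
`(p'_t, P'_T)` with the same joint measure `p ⊗ P_T = p' ⊗ P'_T` that has no drift. -/
def HasNoProperDrift {𝔗 𝔛 : Type*} [MeasurableSpace 𝔗] [MeasurableSpace 𝔛]
    (p : Kernel 𝔗 𝔛) (PT : Measure 𝔗) : Prop :=
  ∃ (p' : Kernel 𝔗 𝔛) (PT' : Measure 𝔗), IsMarkovKernel p' ∧ IsProbabilityMeasure PT' ∧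
    PT' ⊗ₘ p' = PT ⊗ₘ p ∧ HasNoDrift p' PT'

/-- The `𝔗`-invariant model of a drift process over a non-null set `A`:
the probability measure `p_A(D) = P_T(A)⁻¹ ∫_A p_t(D) dP_T(t)`. -/
noncomputable def invariantModel {𝔗 𝔛 : Type*} [MeasurableSpace 𝔗] [MeasurableSpace 𝔛]
    (p : Kernel 𝔗 𝔛) (PT : Measure 𝔗) (A : Set 𝔗) : Measure 𝔛 :=
  (PT A)⁻¹ • (PT.restrict A).bind (fun t => p t)

/-!
No proper drift means exactly that the joint law `P_T ⊗ p` is a product `P_T × μ`. If it is,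
every invariant model equals `μ`, so no set is alternating. Conversely, if no `A ∈ ℬ₀` is
alternating with its complement, then `p_A` is the marginal `p ∘ P_T` for all non-null
`A ∈ ℬ₀`, since the marginal is the convex combination `P_T(A) p_A + P_T(Aᶜ) p_{Aᶜ}`.
Hence `P_T ⊗ p` and `P_T × (p ∘ P_T)` agree on the π-system of rectangles `A × D` with `A ∈ ℬ₀ ∪ {𝔗}`,
which generates the product σ-algebra.
-/

open Set

section InvariantModel

variable {𝔗 𝔛 : Type*} [MeasurableSpace 𝔗] [MeasurableSpace 𝔛]
  {p : Kernel 𝔗 𝔛} {PT : Measure 𝔗} {A : Set 𝔗}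

lemma invariantModel_apply {D : Set 𝔛} (hD : MeasurableSet D) :
    invariantModel p PT A D = (PT A)⁻¹ * ∫⁻ t in A, p t D ∂PT := by
  rw [invariantModel, Measure.smul_apply, smul_eq_mul,
    Measure.bind_apply hD p.measurable.aemeasurable]

lemma measure_mul_invariantModel_apply (h0 : PT A ≠ 0) (htop : PT A ≠ ⊤) {D : Set 𝔛}
    (hD : MeasurableSet D) :
    PT A * invariantModel p PT A D = ∫⁻ t in A, p t D ∂PT := by
  rw [invariantModel_apply hD, ← mul_assoc, ENNReal.mul_inv_cancel h0 htop, one_mul]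

lemma invariantModel_eq_comp_of_measure_compl_eq_zero [IsProbabilityMeasure PT]
    (h : PT Aᶜ = 0) : invariantModel p PT A = p ∘ₘ PT := by
  have hrestrict : PT.restrict A = PT := Measure.restrict_eq_self_of_ae_mem (ae_iff.2 h)
  have hA : PT A = 1 := by rw [← Measure.restrict_apply_univ, hrestrict, measure_univ]
  rw [invariantModel, hrestrict, hA, inv_one, one_smul]

lemma invariantModel_eq_comp_of_eq_compl [IsProbabilityMeasure PT] (hA : MeasurableSet A)
    (h0 : PT A ≠ 0) (hc0 : PT Aᶜ ≠ 0) (h : invariantModel p PT A = invariantModel p PT Aᶜ) :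
    invariantModel p PT A = p ∘ₘ PT := by
  ext D hD
  symm
  calc (p ∘ₘ PT) D = ∫⁻ t in A, p t D ∂PT + ∫⁻ t in Aᶜ, p t D ∂PT := by
        rw [Measure.bind_apply hD p.measurable.aemeasurable, lintegral_add_compl _ hA]
    _ = (PT A + PT Aᶜ) * invariantModel p PT A D := by
        rw [← measure_mul_invariantModel_apply h0 (measure_ne_top _ _) hD,
          ← measure_mul_invariantModel_apply hc0 (measure_ne_top _ _) hD, h, add_mul]
    _ = invariantModel p PT A D := by
        rw [measure_add_measure_compl hA, measure_univ, one_mul]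

lemma invariantModel_eq_of_compProd_eq_prod [IsFiniteMeasure PT] [IsSFiniteKernel p]
    {μ : Measure 𝔛} [SFinite μ] (h : PT ⊗ₘ p = PT.prod μ) (hA : MeasurableSet A)
    (h0 : PT A ≠ 0) : invariantModel p PT A = μ := by
  ext D hD
  rw [invariantModel_apply hD, ← Measure.compProd_apply_prod hA hD, h, Measure.prod_prod,
    ← mul_assoc, ENNReal.inv_mul_cancel h0 (measure_ne_top _ _), one_mul]

lemma compProd_eq_prod_of_invariantModel_eq [IsFiniteMeasure PT] [IsFiniteKernel p]
    {μ : Measure 𝔛} [SFinite μ] {C : Set (Set 𝔗)} (hgen : MeasurableSpace.generateFrom C = ‹_›)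
    (hC : IsPiSystem C) (huniv : univ ∈ C) (h : ∀ A ∈ C, PT A ≠ 0 → invariantModel p PT A = μ) :
    PT ⊗ₘ p = PT.prod μ := by
  have hspan : IsCountablySpanning C := ⟨fun _ => univ, fun _ => huniv, iUnion_const _⟩
  have hrect : ∀ A ∈ C, ∀ D : Set 𝔛, MeasurableSet D →
      (PT ⊗ₘ p) (A ×ˢ D) = PT.prod μ (A ×ˢ D) := by
    intro A hA D hD
    rw [Measure.compProd_apply_prod (hgen ▸ MeasurableSpace.measurableSet_generateFrom hA) hD,
      Measure.prod_prod]
    by_cases h0 : PT A = 0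
    · rw [setLIntegral_measure_zero _ _ h0, h0, zero_mul]
    · rw [← measure_mul_invariantModel_apply h0 (measure_ne_top _ _) hD, h A hA h0]
  refine ext_of_generate_finite _
    (generateFrom_eq_prod hgen MeasurableSpace.generateFrom_measurableSet hspan
      isCountablySpanning_measurableSet).symm
    (hC.prod MeasurableSpace.isPiSystem_measurableSet) ?_ ?_
  · rintro _ ⟨A, hA, D, hD, rfl⟩
    exact hrect A hA D hD
  · rw [← univ_prod_univ]
    exact hrect univ huniv univ MeasurableSet.univ

end InvariantModel

section Drift

variable {𝔗 𝔛 : Type*} [MeasurableSpace 𝔗] [MeasurableSpace 𝔛]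
  {p : Kernel 𝔗 𝔛} {PT : Measure 𝔗}

lemma HasNoDrift.exists_compProd_eq_prod [NeZero PT] [SFinite PT] [IsSFiniteKernel p]
    (h : HasNoDrift p PT) : ∃ s, PT ⊗ₘ p = PT.prod (p s) := by
  obtain ⟨s, hs⟩ := (Measure.ae_ae_of_ae_prod h).exists
  refine ⟨s, ?_⟩
  rw [← Measure.compProd_const]
  exact Measure.compProd_congr (hs.mono fun _ ht => ht.symm)

theorem hasNoProperDrift_iff_exists_compProd_eq_prod [IsProbabilityMeasure PT]
    [IsMarkovKernel p] :
    HasNoProperDrift p PT ↔ ∃ μ : Measure 𝔛, IsProbabilityMeasure μ ∧ PT ⊗ₘ p = PT.prod μ := by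
  constructor
  · rintro ⟨p', PT', hp', hPT', hjoint, hnd⟩
    obtain ⟨s, hs⟩ := hnd.exists_compProd_eq_prod
    have hPT : PT' = PT := by
      rw [← Measure.fst_compProd PT' p', hjoint, Measure.fst_compProd]
    subst hPT
    exact ⟨p' s, inferInstance, hjoint ▸ hs⟩
  · rintro ⟨μ, hμ, h⟩
    exact ⟨Kernel.const 𝔗 μ, PT, inferInstance, inferInstance, by rw [Measure.compProd_const, h],
      ae_of_all _ fun _ => rfl⟩

end Drift

/-- Let `ℬ₀` be a generating set of the σ-algebra on `𝔗` that is stable under finite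
intersections. A drift process has proper drift iff there exists `A ∈ ℬ₀` such that `A`
and `Aᶜ` are alternating sets, i.e. `P_T(A) ∈ (0,1)` and `p_A ≠ p_{Aᶜ}`. -/
theorem properDrift_iff_alternating_in_generator {𝔗 𝔛 : Type*} [m𝔗 : MeasurableSpace 𝔗]
    [MeasurableSpace 𝔛] (p : Kernel 𝔗 𝔛) [IsMarkovKernel p]
    (PT : Measure 𝔗) [IsProbabilityMeasure PT]
    (ℬ₀ : Set (Set 𝔗)) (hgen : MeasurableSpace.generateFrom ℬ₀ = m𝔗)
    (hinter : ∀ A ∈ ℬ₀, ∀ B ∈ ℬ₀, A ∩ B ∈ ℬ₀) :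
    ¬ HasNoProperDrift p PT ↔
      ∃ A ∈ ℬ₀, 0 < PT A ∧ PT A < 1 ∧
        invariantModel p PT A ≠ invariantModel p PT Aᶜ := by
  have hmeas : ∀ A ∈ ℬ₀, MeasurableSet A :=
    fun A hA => hgen ▸ MeasurableSpace.measurableSet_generateFrom hA
  rw [hasNoProperDrift_iff_exists_compProd_eq_prod]
  constructor
  · intro hdrift
    by_contra! hno
    refine hdrift ⟨p ∘ₘ PT, inferInstance, compProd_eq_prod_of_invariantModel_eq
      (C := insert univ ℬ₀) (by rw [MeasurableSpace.generateFrom_insert_univ, hgen])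
      (IsPiSystem.insert_univ fun A hA B hB _ => hinter A hA B hB) (mem_insert _ _) ?_⟩
    intro A hA h0
    by_cases hc0 : PT Aᶜ = 0
    · exact invariantModel_eq_comp_of_measure_compl_eq_zero hc0
    obtain rfl | hA := hA
    · simp at hc0
    have h1 : PT A < 1 := prob_le_one.lt_of_ne ((prob_compl_eq_zero_iff (hmeas A hA)).not.1 hc0)
    exact invariantModel_eq_comp_of_eq_compl (hmeas A hA) h0 hc0
      (hno A hA (pos_iff_ne_zero.2 h0) h1)
  · rintro ⟨A, hA, h0, h1, hne⟩ ⟨μ, _, h⟩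
    have hc0 : PT Aᶜ ≠ 0 := (prob_compl_eq_zero_iff (hmeas A hA)).not.2 h1.ne
    exact hne ((invariantModel_eq_of_compProd_eq_prod h (hmeas A hA) h0.ne').trans
      (invariantModel_eq_of_compProd_eq_prod h (hmeas A hA).compl hc0).symm)
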